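/- arXiv:1801.08345 — 2 statements merged into one kernel-verified Lean document; each statement's English description precedes it below -/
import Mathlib

section
/- For integers k ≥ 2 and n ≥ k+1 with n·k even, there exists a connected k-regular simple graph on n vertices. -/
/-!
Take the circulant graph on `Fin n` with jumps `±1, …, ±⌊k/2⌋`, adding the jump `n/2` when `k` is
odd (then `n` is even by the parity hypothesis, and `n/2 = -(n/2)`). Since `k < n` these `k` jumps
are distinct and nonzero, so every vertex has exactly `k` neighbours; the jump `1` makes the graph
contain the `n`-cycle, so it is connected.
-/

open SimpleGraph Finset

namespace SimpleGraph

variable {G : Type*} [AddGroup G] {s : Set G}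

theorem circulantGraph_adj_iff_sub_mem (h0 : 0 ∉ s) (hneg : ∀ x ∈ s, -x ∈ s) {u v : G} :
    (circulantGraph s).Adj u v ↔ v - u ∈ s := by
  rw [circulantGraph_adj]
  refine ⟨fun ⟨_, h⟩ => h.elim (fun h => by simpa using hneg _ h) id, fun h => ⟨?_, .inr h⟩⟩
  rintro rfl
  exact h0 (by simpa using h)

theorem neighborSet_circulantGraph (h0 : 0 ∉ s) (hneg : ∀ x ∈ s, -x ∈ s) (v : G) :
    (circulantGraph s).neighborSet v = (· + v) '' s := by
  ext w
  rw [mem_neighborSet, circulantGraph_adj_iff_sub_mem h0 hneg]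
  exact ⟨fun h => ⟨w - v, h, sub_add_cancel w v⟩, by rintro ⟨t, ht, rfl⟩; simpa using ht⟩

theorem ncard_neighborSet_circulantGraph (h0 : 0 ∉ s) (hneg : ∀ x ∈ s, -x ∈ s) (v : G) :
    ((circulantGraph s).neighborSet v).ncard = s.ncard := by
  rw [neighborSet_circulantGraph h0 hneg, Set.ncard_image_of_injective _ (add_left_injective v)]

theorem circulantGraph_connected_of_one_mem {n : ℕ} [NeZero n] {s : Set (Fin n)} (h1 : 1 ∈ s) :
    (circulantGraph s).Connected := by
  obtain ⟨n, rfl⟩ := Nat.exists_eq_succ_of_ne_zero (NeZero.ne n)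
  have hle : circulantGraph {1} ≤ circulantGraph s := by
    intro u v
    simp only [circulantGraph_adj, Set.mem_singleton_iff]
    exact And.imp_right (Or.imp (· ▸ h1) (· ▸ h1))
  exact (cycleGraph_eq_circulantGraph n ▸ cycleGraph_connected).mono hle

end SimpleGraph

namespace Fin

/-- `circulantGraph (shortJumps n m)` is the `m`-th power of the `n`-cycle. -/
def shortJumps (n m : ℕ) : Set (Fin n) := Fin.val ⁻¹' ↑(Icc 1 m ∪ Icc (n - m) (n - 1))

theorem mem_shortJumps {m : ℕ} {x : Fin n} :
    x ∈ shortJumps n m ↔ 1 ≤ x.val ∧ x.val ≤ m ∨ n - m ≤ x.val ∧ x.val ≤ n - 1 := by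
  simp [shortJumps]

theorem ncard_shortJumps {m : ℕ} (h : 2 * m < n) : (shortJumps n m).ncard = 2 * m := by
  rw [shortJumps, Set.ncard_preimage_of_injective_subset_range Fin.val_injective,
    Set.ncard_coe_finset, card_union_of_disjoint, Nat.card_Icc, Nat.card_Icc]
  · omega
  · exact disjoint_left.2 fun i hi hi' => by simp only [mem_Icc] at hi hi'; omega
  · intro i hi
    simp only [coe_union, coe_Icc, Set.mem_union, Set.mem_Icc] at hi
    exact Fin.range_val ▸ show i < n by omega

theorem zero_notMem_shortJumps [NeZero n] {m : ℕ} (h : m < n) : 0 ∉ shortJumps n m := by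
  rw [mem_shortJumps, Fin.val_zero]
  omega

theorem one_mem_shortJumps [NeZero n] {m : ℕ} (hm : 1 ≤ m) (hn : 1 < n) :
    (1 : Fin n) ∈ shortJumps n m := by
  rw [mem_shortJumps, Fin.val_one', Nat.mod_eq_of_lt hn]
  omega

theorem neg_mem_shortJumps [NeZero n] {m : ℕ} {x : Fin n} (hx : x ∈ shortJumps n m) :
    -x ∈ shortJumps n m := by
  rw [mem_shortJumps] at hx ⊢
  rw [Fin.val_neg]
  split_ifs with h0
  · simpa [h0] using hx
  · have := x.isLt
    omega

theorem exists_symmetric_jumps (n k : ℕ) [NeZero n] (hk : 2 ≤ k) (hn : k < n)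
    (hpar : Even (n * k)) :
    ∃ s : Set (Fin n), 1 ∈ s ∧ 0 ∉ s ∧ (∀ x ∈ s, -x ∈ s) ∧ s.ncard = k := by
  obtain ⟨m, rfl | rfl⟩ := Nat.even_or_odd' k
  · exact ⟨shortJumps n m, one_mem_shortJumps (by omega) (by omega),
      zero_notMem_shortJumps (by omega), fun _ => neg_mem_shortJumps, ncard_shortJumps (by omega)⟩
  obtain ⟨p, rfl⟩ : Even n := (Nat.even_mul.1 hpar).resolve_right (Nat.not_even_two_mul_add_one m)
  let a : Fin (p + p) := ⟨p, by omega⟩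
  have ha : a ∉ shortJumps (p + p) m := by simp only [mem_shortJumps, a]; omega
  refine ⟨insert a (shortJumps _ m), .inr (one_mem_shortJumps (by omega) (by omega)), ?_, ?_, ?_⟩
  · simp only [Set.mem_insert_iff, not_or]
    exact ⟨fun h => by simp [Fin.ext_iff, a] at h; omega, zero_notMem_shortJumps (by omega)⟩
  · rintro x (rfl | hx)
    · exact .inl (neg_eq_of_add_eq_zero_left (Fin.ext (by simp [Fin.val_add, a])))
    · exact .inr (neg_mem_shortJumps hx)
  · rw [Set.ncard_insert_of_notMem ha, ncard_shortJumps (by omega)]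

end Fin

theorem exists_connected_regular (k n : ℕ) (hk : 2 ≤ k) (hn : k + 1 ≤ n)
    (hpar : Even (n * k)) :
    ∃ G : SimpleGraph (Fin n), G.Connected ∧ ∀ v, (G.neighborSet v).ncard = k := by
  have : NeZero n := ⟨by omega⟩
  obtain ⟨s, h1, h0, hneg, hcard⟩ := Fin.exists_symmetric_jumps n k hk hn hpar
  exact ⟨circulantGraph s, circulantGraph_connected_of_one_mem h1,
    fun v => hcard ▸ ncard_neighborSet_circulantGraph h0 hneg v⟩
end

section
/- Let k ≥ 2 be even and let G be a connected k-regular simple graph on vertex set {1,...,n}. Suppose e_1,...,e_{k/2} are pairwise vertex-disjoint edges of G all lying on a common path of G. Then the graph obtained from G by deleting the edges e_1,...,e_{k/2} and joining a new vertex n+1 to all k endpoints of these edges is a connected k-regular simple graph on n+1 vertices. -/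
/-!
Every deleted edge `ab` is replaced by the path `a, n+1, b`, so the new graph inherits the
connectivity of `G`, and the new vertex is reachable since `s` is nonempty. The edges of `s` form
a matching, so an endpoint of one of them loses exactly one old neighbour and gains `n+1`, while
`n+1` itself is adjacent to the `2 · (k/2) = k` endpoints.
-/

/-- The graph on `Fin (n+1)` obtained from `G` on `Fin n` by deleting the edges in `s`
and joining the new vertex `Fin.last n` to every endpoint of an edge of `s`. -/
def extendByOne (n : ℕ) (G : SimpleGraph (Fin n)) (s : Finset (Sym2 (Fin n))) :
    SimpleGraph (Fin (n + 1)) :=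
  SimpleGraph.fromRel (fun x y =>
    (∃ x' y' : Fin n, x = x'.castSucc ∧ y = y'.castSucc ∧ G.Adj x' y' ∧ s(x', y') ∉ s)
    ∨ (x = Fin.last n ∧ ∃ y' : Fin n, y = y'.castSucc ∧ ∃ e ∈ s, y' ∈ e))

open SimpleGraph

section
variable {n : ℕ} {G : SimpleGraph (Fin n)} {s : Finset (Sym2 (Fin n))}

lemma extendByOne_adj_castSucc {a b : Fin n} :
    (extendByOne n G s).Adj a.castSucc b.castSucc ↔ G.Adj a b ∧ s(a, b) ∉ s := by
  simp only [extendByOne, fromRel_adj, Fin.castSucc_inj, ne_eq, Fin.castSucc_ne_last,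
    false_and, or_false]
  constructor
  · rintro ⟨-, ⟨x, y, rfl, rfl, h⟩ | ⟨x, y, rfl, rfl, hadj, hs⟩⟩
    exacts [h, ⟨hadj.symm, by rwa [Sym2.eq_swap]⟩]
  · rintro ⟨hadj, hs⟩
    exact ⟨hadj.ne, Or.inl ⟨a, b, rfl, rfl, hadj, hs⟩⟩

lemma extendByOne_adj_last {b : Fin n} :
    (extendByOne n G s).Adj (Fin.last n) b.castSucc ↔ ∃ e ∈ s, b ∈ e := by
  simp [extendByOne, (Fin.castSucc_ne_last _).symm]

lemma extendByOne_reachable_castSucc_of_adj {a b : Fin n} (h : G.Adj a b) :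
    (extendByOne n G s).Reachable a.castSucc b.castSucc := by
  by_cases hab : s(a, b) ∈ s
  · have ha := (extendByOne_adj_last (G := G)).2 ⟨_, hab, Sym2.mem_mk_left a b⟩
    have hb := (extendByOne_adj_last (G := G)).2 ⟨_, hab, Sym2.mem_mk_right a b⟩
    exact ha.symm.reachable.trans hb.reachable
  · exact (extendByOne_adj_castSucc.2 ⟨h, hab⟩).reachable

lemma extendByOne_reachable_castSucc_of_reachable {a b : Fin n} (h : G.Reachable a b) :
    (extendByOne n G s).Reachable a.castSucc b.castSucc := by
  obtain ⟨w⟩ := h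
  induction w with
  | nil => rfl
  | cons hadj _ ih => exact (extendByOne_reachable_castSucc_of_adj hadj).trans ih

lemma extendByOne_connected (hG : G.Preconnected) (hs : s.Nonempty) :
    (extendByOne n G s).Connected := by
  obtain ⟨e, he⟩ := hs
  have hlast : (extendByOne n G s).Reachable (Fin.last n) e.out.1.castSucc :=
    (extendByOne_adj_last.2 ⟨e, he, Sym2.out_fst_mem e⟩).reachable
  rw [connected_iff_exists_forall_reachable]
  refine ⟨Fin.last n, fun v => ?_⟩
  induction v using Fin.lastCases with
  | last => rfl
  | cast b => exact hlast.trans (extendByOne_reachable_castSucc_of_reachable (hG _ b))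

lemma extendByOne_neighborSet_last :
    (extendByOne n G s).neighborSet (Fin.last n) =
      Fin.castSucc '' ↑(s.biUnion Sym2.toFinset) := by
  ext v
  induction v using Fin.lastCases with
  | last => simp
  | cast b => simp [extendByOne_adj_last]

lemma extendByOne_ncard_neighborSet_last (hsub : ∀ e ∈ s, e ∈ G.edgeSet)
    (hdisj : ∀ e ∈ s, ∀ f ∈ s, e ≠ f → ∀ x : Fin n, x ∈ e → x ∉ f) :
    ((extendByOne n G s).neighborSet (Fin.last n)).ncard = 2 * s.card := by
  have hpair : (s : Set (Sym2 (Fin n))).PairwiseDisjoint Sym2.toFinset :=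
    fun e he f hf hef => Finset.disjoint_left.2 fun x hxe hxf =>
      hdisj e he f hf hef x (Sym2.mem_toFinset.1 hxe) (Sym2.mem_toFinset.1 hxf)
  rw [extendByOne_neighborSet_last, Set.ncard_image_of_injective _ (Fin.castSucc_injective n),
    Set.ncard_coe_finset, Finset.card_biUnion hpair, Finset.sum_congr rfl fun e he =>
      Sym2.card_toFinset_of_not_isDiag e (G.not_isDiag_of_mem_edgeSet (hsub e he)),
    Finset.sum_const, smul_eq_mul, mul_comm]

lemma extendByOne_neighborSet_castSucc_of_mem
    (hdisj : ∀ e ∈ s, ∀ f ∈ s, e ≠ f → ∀ x : Fin n, x ∈ e → x ∉ f)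
    {a b : Fin n} (hab : s(a, b) ∈ s) :
    (extendByOne n G s).neighborSet a.castSucc =
      insert (Fin.last n) (Fin.castSucc '' (G.neighborSet a \ {b})) := by
  ext v
  induction v using Fin.lastCases with
  | last =>
    simpa [adj_comm _ a.castSucc, extendByOne_adj_last] using ⟨_, hab, Sym2.mem_mk_left a b⟩
  | cast y =>
    simp only [mem_neighborSet, extendByOne_adj_castSucc, Set.mem_insert_iff,
      Fin.castSucc_ne_last, false_or, Set.mem_image, Fin.castSucc_inj, exists_eq_right,
      Set.mem_sdiff, Set.mem_singleton_iff]
    refine and_congr_right fun hay => ⟨?_, ?_⟩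
    · rintro hs rfl
      exact hs hab
    · intro hyb hs
      refine hdisj _ hab _ hs ?_ a (Sym2.mem_mk_left a b) (Sym2.mem_mk_left a y)
      rw [Ne, Sym2.congr_right]
      exact Ne.symm hyb

lemma extendByOne_neighborSet_castSucc_of_forall_notMem {a : Fin n} (ha : ∀ e ∈ s, a ∉ e) :
    (extendByOne n G s).neighborSet a.castSucc = Fin.castSucc '' G.neighborSet a := by
  ext v
  induction v using Fin.lastCases with
  | last => simpa [adj_comm _ a.castSucc, extendByOne_adj_last] using ha
  | cast y =>
    simpa [extendByOne_adj_castSucc, Fin.castSucc_inj] using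
      fun _ hs => ha _ hs (Sym2.mem_mk_left a y)

lemma extendByOne_ncard_neighborSet_castSucc (hsub : ∀ e ∈ s, e ∈ G.edgeSet)
    (hdisj : ∀ e ∈ s, ∀ f ∈ s, e ≠ f → ∀ x : Fin n, x ∈ e → x ∉ f) (a : Fin n) :
    ((extendByOne n G s).neighborSet a.castSucc).ncard = (G.neighborSet a).ncard := by
  by_cases ha : ∃ e ∈ s, a ∈ e
  · obtain ⟨e, he, hae⟩ := ha
    obtain ⟨b, rfl⟩ := Sym2.mem_iff_exists.1 hae
    have hb : b ∈ G.neighborSet a := hsub _ he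
    rw [extendByOne_neighborSet_castSucc_of_mem hdisj he,
      Set.ncard_insert_of_notMem (by simp [Fin.castSucc_ne_last]),
      Set.ncard_image_of_injective _ (Fin.castSucc_injective n),
      Set.ncard_sdiff_singleton_add_one hb]
  · push Not at ha
    rw [extendByOne_neighborSet_castSucc_of_forall_notMem ha,
      Set.ncard_image_of_injective _ (Fin.castSucc_injective n)]

end

theorem extendByOne_connected_regular_general (n k : ℕ) (hk : Even k) (hk2 : 2 ≤ k)
    (G : SimpleGraph (Fin n)) (hc : G.Connected)
    (hreg : ∀ v, (G.neighborSet v).ncard = k)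
    (s : Finset (Sym2 (Fin n))) (hcard : s.card = k / 2)
    (hsub : ∀ e ∈ s, e ∈ G.edgeSet)
    (hdisj : ∀ e ∈ s, ∀ f ∈ s, e ≠ f → ∀ x : Fin n, x ∈ e → x ∉ f) :
    (extendByOne n G s).Connected ∧
      ∀ v, ((extendByOne n G s).neighborSet v).ncard = k := by
  have hs : s.Nonempty := Finset.card_pos.1 (by omega)
  refine ⟨extendByOne_connected hc.preconnected hs, fun v => ?_⟩
  induction v using Fin.lastCases with
  | last =>
    rw [extendByOne_ncard_neighborSet_last hsub hdisj, hcard, Nat.two_mul_div_two_of_even hk]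
  | cast a => rw [extendByOne_ncard_neighborSet_castSucc hsub hdisj, hreg]

theorem extendByOne_connected_regular (n k : ℕ) (hk : Even k) (hk2 : 2 ≤ k)
    (G : SimpleGraph (Fin n)) (hc : G.Connected)
    (hreg : ∀ v, (G.neighborSet v).ncard = k)
    (s : Finset (Sym2 (Fin n))) (hcard : s.card = k / 2)
    (hsub : ∀ e ∈ s, e ∈ G.edgeSet)
    (hdisj : ∀ e ∈ s, ∀ f ∈ s, e ≠ f → ∀ x : Fin n, x ∈ e → x ∉ f)
    (hpath : ∃ (u v : Fin n) (p : G.Walk u v), p.IsPath ∧ ∀ e ∈ s, e ∈ p.edges) :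
    (extendByOne n G s).Connected ∧
      ∀ v, ((extendByOne n G s).neighborSet v).ncard = k :=
  extendByOne_connected_regular_general n k hk hk2 G hc hreg s hcard hsub hdisj
end
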